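/- Let C be an ample concept class over X and let r : C → X(C) be a bijection. Then the following conditions are equivalent: (R1) ∪-non-clashing: for all distinct c, c' ∈ C, c ∩ (r(c) ∪ r(c')) ≠ c' ∩ (r(c) ∪ r(c')); (R2) reconstruction: for every realizable sample (Y, s) of C there is a unique c ∈ C with c ∩ Y = s and r(c) ⊆ Y; (R3) cube injectivity: for every cube B of 2^X, the map c ↦ r(c) ∩ supp(B) is injective on C ∩ B; (R4) Δ-non-clashing: for all distinct c, c' ∈ C, c ∩ (r(c) Δ r(c')) ≠ c' ∩ (r(c) Δ r(c')). Moreover, any map r : C → X(C) satisfying (R4) (not assumed bijective) is automatically a bijection. -/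

import Mathlib

variable {X : Type} [Fintype X] [DecidableEq X]

/-- Hamming distance between two subsets of `X` (size of symmetric difference). -/
def hdist (c c' : Finset X) : ℕ := ((c \ c') ∪ (c' \ c)).card

/-- The restriction `C|Y = {c ∩ Y : c ∈ C}`. -/
def restrictTo (C : Finset (Finset X)) (Y : Finset X) : Finset (Finset X) :=
  C.image (· ∩ Y)

/-- `Y` is shattered by `C`, i.e. `C|Y = 2^Y`. -/
def Shatters (C : Finset (Finset X)) (Y : Finset X) : Prop :=
  ∀ s ∈ Y.powerset, ∃ c ∈ C, c ∩ Y = s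

instance (C : Finset (Finset X)) : DecidablePred (Shatters C) := fun _ => by
  unfold Shatters; infer_instance

/-- The family `X̄(C)` of all sets shattered by `C`. -/
def shatteredSets (C : Finset (Finset X)) : Finset (Finset X) :=
  Finset.univ.filter (Shatters C)

/-- The VC dimension of `C`: maximum size of a shattered set. -/
def vcDim (C : Finset (Finset X)) : ℕ := (shatteredSets C).sup Finset.card

/-- `C` is ample: `|C| = |X̄(C)|`. -/
def IsAmple (C : Finset (Finset X)) : Prop := C.card = (shatteredSets C).card

/-- `C` is a maximum class of VC dimension `d`. -/
def IsMaximumClass (C : Finset (Finset X)) (d : ℕ) : Prop :=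
  vcDim C = d ∧ C.card = ∑ i ∈ Finset.range (d + 1), (Fintype.card X).choose i

/-- `B` is a cube with support `Y`: `B = {t ∪ s : s ⊆ Y}` for some `t ⊆ X \ Y`. -/
def IsCubeS (B : Finset (Finset X)) (Y : Finset X) : Prop :=
  ∃ t : Finset X, t ∩ Y = ∅ ∧ B = Y.powerset.image (fun s => t ∪ s)

/-- `B` is a cube. -/
def IsCube (B : Finset (Finset X)) : Prop := ∃ Y, IsCubeS B Y

/-- `B` is a cube of `C`: a cube contained in `C`. -/
def IsCubeOf (C B : Finset (Finset X)) : Prop := B ⊆ C ∧ IsCube B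

/-- `B` is a maximal cube of `C` (maximal under inclusion among cubes of `C`). -/
def IsMaximalCubeOf (C B : Finset (Finset X)) : Prop :=
  IsCubeOf C B ∧ ∀ B', IsCubeOf C B' → B ⊆ B' → B = B'

/-- `c` is a corner of `C`: a concept of `C` belonging to a unique maximal cube of `C`. -/
def IsCornerOf (C : Finset (Finset X)) (c : Finset X) : Prop :=
  c ∈ C ∧ ∃! B, IsMaximalCubeOf C B ∧ c ∈ B

/-- The one-inclusion graph `G(C)`. -/
def oneInclusionGraph (C : Finset (Finset X)) : SimpleGraph {c : Finset X // c ∈ C} where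
  Adj c c' := hdist c.1 c'.1 = 1
  symm := by
    constructor
    intro a b h
    simpa [hdist, Finset.union_comm] using h
  loopless := by
    constructor
    intro a h
    simp [hdist] at h

/-- `C` is isometric: `G(C)` is connected and graph distances equal Hamming distances. -/
def IsIsometric (C : Finset (Finset X)) : Prop :=
  (oneInclusionGraph C).Connected ∧
  ∀ c c' : {c : Finset X // c ∈ C}, (oneInclusionGraph C).dist c c' = hdist c.1 c'.1

/-- `C` is weakly isometric: `G(C)` is connected and graph distances equal Hamming
distances for pairs at Hamming distance at most 2. -/
def IsWeaklyIsometric (C : Finset (Finset X)) : Prop :=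
  (oneInclusionGraph C).Connected ∧
  ∀ c c' : {c : Finset X // c ∈ C}, hdist c.1 c'.1 ≤ 2 →
    (oneInclusionGraph C).dist c c' = hdist c.1 c'.1

/-- A list of concepts is a corner peeling if it has no duplicates and each element is a
corner of the corresponding level set. -/
def IsCornerPeeling (l : List (Finset X)) : Prop :=
  l.Nodup ∧ ∀ i (h : i < l.length), IsCornerOf ((l.take (i + 1)).toFinset) (l.get ⟨i, h⟩)

/-- `C` is dismantlable: it admits a corner peeling ordering of all its concepts. -/
def Dismantlable (C : Finset (Finset X)) : Prop :=
  ∃ l : List (Finset X), l.toFinset = C ∧ IsCornerPeeling l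

/-- Non-clashing condition for a map `r`. -/
def NonClashing (C : Finset (Finset X)) (r : Finset X → Finset X) : Prop :=
  ∀ c ∈ C, ∀ c' ∈ C, c ≠ c' → c ∩ (r c ∪ r c') ≠ c' ∩ (r c ∪ r c')

/-- `r` is a representation map for `C`: a non-clashing bijection from `C` onto `X̄(C)`. -/
def IsRepMap (C : Finset (Finset X)) (r : Finset X → Finset X) : Prop :=
  (∀ c ∈ C, r c ∈ shatteredSets C) ∧
  Set.InjOn r ↑C ∧
  (∀ Y ∈ shatteredSets C, ∃ c ∈ C, r c = Y) ∧
  NonClashing C r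

/-- `C` admits an unlabeled sample compression scheme of size `k`. -/
def HasUSCS (C : Finset (Finset X)) (k : ℕ) : Prop :=
  ∃ (α : Finset X → Finset X → Finset X) (β : Finset X → Finset X),
    ∀ (Y : Finset X), ∀ c ∈ C,
      α Y (c ∩ Y) ⊆ Y ∧ (α Y (c ∩ Y)).card ≤ k ∧
      β (α Y (c ∩ Y)) ∈ C ∧ β (α Y (c ∩ Y)) ∩ Y = c ∩ Y

/-- The cube of `2^X` with support `Y` containing `c`. -/
def cubeAt (c Y : Finset X) : Finset (Finset X) :=
  Y.powerset.image (fun s => (c \ Y) ∪ s)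

/-- Condition (C1): for every `c ∈ C`, the cube with support `r c` containing `c`
is a cube of `C`. -/
def CondC1 (C : Finset (Finset X)) (r : Finset X → Finset X) : Prop :=
  ∀ c ∈ C, cubeAt c (r c) ⊆ C

/-- Condition (C2): every cube of `C` has a unique concept `c` with `r c ∩ supp B = ∅`. -/
def CondC2 (C : Finset (Finset X)) (r : Finset X → Finset X) : Prop :=
  ∀ B Y, B ⊆ C → IsCubeS B Y → ∃! c, c ∈ B ∧ r c ∩ Y = ∅

/-- The facet of the cross-polytope corresponding to a subset `c ⊆ X`:
`+x ∈ σ_c` iff `x ∈ c` (where `+x = Sum.inl x` and `-x = Sum.inr x`). -/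
def facet (c : Finset X) : Finset (X ⊕ X) :=
  c.image Sum.inl ∪ (Finset.univ \ c).image Sum.inr

/-- A list of facets of the cross-polytope is a partial shelling. -/
def IsPartialShelling (L : List (Finset (X ⊕ X))) : Prop :=
  L.Nodup ∧ ∀ i j, i < j → j < L.length →
    ∃ k < j, ((L.getD k ∅) ∩ (L.getD j ∅)).card = Fintype.card X - 1 ∧
      (L.getD i ∅) ∩ (L.getD j ∅) ⊆ (L.getD k ∅) ∩ (L.getD j ∅)

/-- `Q` is an incomplete cube for `(C, D)` with support `σ`: a cube of `C` whose
support `σ` is a missed simplex (shattered by `C` but not by `D`). -/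
def IsIncompleteCube (C D Q : Finset (Finset X)) (σ : Finset X) : Prop :=
  Q ⊆ C ∧ IsCubeS Q σ ∧ Shatters C σ ∧ ¬ Shatters D σ

/-- `c` is the source of the incomplete cube `Q` with support `σ`:
`c ∈ Q` and `c ∩ σ ∉ D|σ`. -/
def IsSource (D Q : Finset (Finset X)) (σ : Finset X) (c : Finset X) : Prop :=
  c ∈ Q ∧ c ∩ σ ∉ restrictTo D σ

/-- The restriction `C_x = C|(X \ {x})`, with concepts viewed as subsets of `X`
avoiding `x`. -/
def restrictX (C : Finset (Finset X)) (x : X) : Finset (Finset X) :=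
  C.image (·.erase x)

/-- The reduction `C^x = {c ⊆ X \ {x} : c ∈ C and c ∪ {x} ∈ C}`. -/
def reduction (C : Finset (Finset X)) (x : X) : Finset (Finset X) :=
  C.filter (fun c => x ∉ c ∧ insert x c ∈ C)

/-- The interval `B(c,c') = {t : d(c,t) + d(t,c') = d(c,c')}`. -/
def interval (c c' : Finset X) : Finset (Finset X) :=
  Finset.univ.filter (fun t => hdist c t + hdist t c' = hdist c c')

/-- `C'` is convex in `C`. -/
def IsConvexIn (C C' : Finset (Finset X)) : Prop :=
  ∀ c ∈ C', ∀ c'' ∈ C', interval c c'' ∩ C ⊆ C'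

/-- `C'` is locally convex in `C`. -/
def IsLocallyConvexIn (C C' : Finset (Finset X)) : Prop :=
  ∀ c ∈ C', ∀ c'' ∈ C', hdist c c'' = 2 → interval c c'' ∩ C ⊆ C'

/-- `C` is a conditional antimatroid: contains `∅`, closed under intersection, and
every concept is generated by its extremal points. -/
def IsCondAntimatroid (C : Finset (Finset X)) : Prop :=
  ∅ ∈ C ∧ (∀ c ∈ C, ∀ c' ∈ C, c ∩ c' ∈ C) ∧
  ∀ c ∈ C, ∀ c' ∈ C, (c.filter (fun x => c.erase x ∈ C)) ⊆ c' → c ⊆ c'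

/-!
Ampleness passes to the restrictions `C|Y` and to the traces `C ∩ B` on cubes `B`: one coordinate
at a time, `C` splits into two pieces of total size `|C|` whose numbers of shattered sets add up
to at most `|X̄(C)|`, so Pajor's inequality `|D| ≤ |X̄(D)|` for the pieces is forced to be an
equality.

(R1) ⇒ (R2): non-clashing makes `c ↦ c ∩ Y` injective on `{c ∈ C | r c ⊆ Y}`, a set of size
`#{Z ∈ X̄(C) | Z ⊆ Y} = |X̄(C|Y)| ≥ |C|Y|`, so it is onto `C|Y`.
(R2) ⇒ (R3): on `G = C ∩ B`, reconstruction gives `#{c ∈ G | r c ∩ supp B ⊆ s} = |G|s|`, which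
by ampleness of `G|s` is `#{Z ∈ X̄(G) | Z ⊆ s}`, for every `s`; by Möbius inversion each fibre of
`c ↦ r c ∩ supp B` on `G` has the size of `{Z ∈ X̄(G) | Z = s}`, at most one.
(R3) ⇒ (R4) uses the cube through `c` whose support is the complement of `r c Δ r c'`, and
(R4) ⇒ (R1) holds since `r c Δ r c' ⊆ r c ∪ r c'`. Finally (R4) makes `r` injective, hence onto
`X(C)` because `|C| = |X(C)|`.
-/

open Finset IncidenceAlgebra

section SetFamilies

variable {α : Type} [DecidableEq α]

theorem eq_of_sum_powerset_eq {f g : Finset α → ℕ}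
    (h : ∀ s : Finset α, ∑ v ∈ s.powerset, f v = ∑ v ∈ s.powerset, g v) : f = g := by
  funext s
  have inversion (φ : Finset α → ℕ) :
      (φ s : ℤ) = ∑ v ∈ Iic s, mu ℤ v s * ((∑ w ∈ v.powerset, φ w : ℕ) : ℤ) := by
    push_cast
    simp only [← Iic_eq_powerset]
    exact moebius_inversion_bot (fun v => (φ v : ℤ)) _ (fun _ => rfl) s
  exact_mod_cast (inversion f).trans (by simp only [h]) |>.trans (inversion g).symm

theorem sum_powerset_card_filter_eq {β : Type*} (G : Finset β) (ρ : β → Finset α)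
    (s : Finset α) : ∑ v ∈ s.powerset, #{g ∈ G | ρ g = v} = #{g ∈ G | ρ g ⊆ s} := by
  rw [card_eq_sum_card_fiberwise (f := ρ) (t := s.powerset)
    fun g hg => mem_powerset.2 (mem_filter.1 hg).2]
  refine sum_congr rfl fun v hv => ?_
  rw [filter_filter]
  exact congrArg card <| filter_congr fun g _ =>
    ⟨fun h => ⟨h ▸ mem_powerset.1 hv, h⟩, And.right⟩

theorem inter_eq_inter_iff_forall {a b W : Finset α} :
    a ∩ W = b ∩ W ↔ ∀ x ∈ W, (x ∈ a ↔ x ∈ b) := by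
  simp only [Finset.ext_iff, mem_inter]
  grind

theorem card_add_card_le_of_insert {F P Q : Finset (Finset α)} {a : α}
    (hP : ∀ s ∈ P, a ∉ s ∧ s ∈ F) (hQ : ∀ s ∈ Q, a ∉ s ∧ insert a s ∈ F) :
    #P + #Q ≤ #F := by
  have hinj : Set.InjOn (insert a) (Q : Set (Finset α)) := fun s hs t ht hst => by
    rw [← erase_insert (hQ s hs).1, hst, erase_insert (hQ t ht).1]
  calc #P + #Q ≤ #{s ∈ F | a ∉ s} + #{s ∈ F | a ∈ s} :=
        add_le_add (card_le_card fun s hs => mem_filter.2 ⟨(hP s hs).2, (hP s hs).1⟩)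
          (card_le_card_of_injOn (insert a) (fun s hs => by simp [(hQ s hs).2]) hinj)
    _ = #F := by rw [add_comm]; exact card_filter_add_card_filter_not _

theorem Finset.Shatters.notMem_of_forall_notMem {𝒜 : Finset (Finset α)} {s : Finset α} {a : α}
    (h : 𝒜.Shatters s) (ha : ∀ t ∈ 𝒜, a ∉ t) : a ∉ s := fun has =>
  let ⟨t, ht, hst⟩ := h.exists_superset
  ha t ht (hst has)

theorem Finset.Shatters.notMem_of_forall_mem {𝒜 : Finset (Finset α)} {s : Finset α} {a : α}
    (h : 𝒜.Shatters s) (ha : ∀ t ∈ 𝒜, a ∈ t) : a ∉ s := fun has =>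
  let ⟨t, ht, hst⟩ := h (empty_subset s)
  notMem_empty a (hst ▸ mem_inter.2 ⟨has, ha t ht⟩)

theorem shatters_insert {𝒜 : Finset (Finset α)} {s : Finset α} {a : α}
    (h : ∀ t ⊆ s, (∃ u ∈ 𝒜, a ∉ u ∧ s ∩ u = t) ∧ ∃ u ∈ 𝒜, a ∈ u ∧ s ∩ u = t) :
    𝒜.Shatters (insert a s) := by
  intro t ht
  rw [subset_insert_iff] at ht
  by_cases hat : a ∈ t
  · obtain ⟨u, hu, hau, hsu⟩ := (h _ ht).2
    exact ⟨u, hu, by rw [insert_inter_of_mem hau, hsu, insert_erase hat]⟩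
  · obtain ⟨u, hu, hau, hsu⟩ := (h _ ht).1
    exact ⟨u, hu, by rw [insert_inter_of_notMem hau, hsu, erase_eq_of_notMem hat]⟩

theorem card_shatterer_filter_add_le (𝒜 : Finset (Finset α)) (a : α) :
    #{t ∈ 𝒜 | a ∈ t}.shatterer + #{t ∈ 𝒜 | a ∉ t}.shatterer ≤ #𝒜.shatterer := by
  rw [← card_union_add_card_inter]
  apply card_add_card_le_of_insert (a := a)
  · intro s hs
    rcases mem_union.1 hs with h | h <;> rw [mem_shatterer] at h
    · exact ⟨h.notMem_of_forall_mem fun t ht => (mem_filter.1 ht).2,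
        mem_shatterer.2 (h.mono_left (filter_subset _ _))⟩
    · exact ⟨h.notMem_of_forall_notMem fun t ht => (mem_filter.1 ht).2,
        mem_shatterer.2 (h.mono_left (filter_subset _ _))⟩
  · intro s hs
    obtain ⟨h₁, h₀⟩ := mem_inter.1 hs
    rw [mem_shatterer] at h₁ h₀
    have ha : a ∉ s := h₀.notMem_of_forall_notMem fun t ht => (mem_filter.1 ht).2
    refine ⟨ha, mem_shatterer.2 (shatters_insert fun t ht => ⟨?_, ?_⟩)⟩
    · obtain ⟨u, hu, hsu⟩ := h₀ ht
      exact ⟨u, (mem_filter.1 hu).1, (mem_filter.1 hu).2, hsu⟩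
    · obtain ⟨u, hu, hsu⟩ := h₁ ht
      exact ⟨u, (mem_filter.1 hu).1, (mem_filter.1 hu).2, hsu⟩

theorem card_restrictX_add_card_reduction (𝒜 : Finset (Finset α)) (a : α) :
    #(restrictX 𝒜 a) + #(reduction 𝒜 a) = #𝒜 := by
  set 𝒰 := {t ∈ 𝒜 | a ∈ t}.image (erase · a)
  have hrestrict : restrictX 𝒜 a = 𝒰 ∪ {t ∈ 𝒜 | a ∉ t} :=
    calc restrictX 𝒜 a = ({t ∈ 𝒜 | a ∈ t} ∪ {t ∈ 𝒜 | a ∉ t}).image (erase · a) := by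
          rw [filter_union_filter_not_eq, restrictX]
      _ = 𝒰 ∪ {t ∈ 𝒜 | a ∉ t} := by
          rw [image_union, image_congr fun t ht => erase_eq_of_notMem (mem_filter.1 ht).2,
            image_id']
  have hreduce : reduction 𝒜 a = 𝒰 ∩ {t ∈ 𝒜 | a ∉ t} := by
    ext t
    simp only [reduction, 𝒰, mem_filter, mem_inter, mem_image]
    constructor
    · rintro ⟨ht, hat, hins⟩
      exact ⟨⟨insert a t, ⟨hins, mem_insert_self a t⟩, erase_insert hat⟩, ht, hat⟩
    · rintro ⟨⟨u, ⟨hu, hau⟩, rfl⟩, ht, -⟩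
      exact ⟨ht, notMem_erase a u, by rwa [insert_erase hau]⟩
  have h𝒰 : #𝒰 = #{t ∈ 𝒜 | a ∈ t} := card_image_of_injOn fun s hs t ht =>
    erase_injOn' a (mem_filter.1 hs).2 (mem_filter.1 ht).2
  rw [hrestrict, hreduce, card_union_add_card_inter, h𝒰, card_filter_add_card_filter_not]

theorem card_shatterer_restrictX_add_reduction_le (𝒜 : Finset (Finset α)) (a : α) :
    #(restrictX 𝒜 a).shatterer + #(reduction 𝒜 a).shatterer ≤ #𝒜.shatterer := by
  apply card_add_card_le_of_insert (a := a)
  · intro s hs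
    rw [mem_shatterer] at hs
    have ha : a ∉ s := hs.notMem_of_forall_notMem fun t ht => by
      obtain ⟨u, -, rfl⟩ := mem_image.1 ht
      exact notMem_erase a u
    refine ⟨ha, mem_shatterer.2 fun t ht => ?_⟩
    obtain ⟨v, hv, hsv⟩ := hs ht
    obtain ⟨u, hu, rfl⟩ := mem_image.1 hv
    rw [inter_erase, erase_eq_of_notMem fun h => ha (mem_inter.1 h).1] at hsv
    exact ⟨u, hu, hsv⟩
  · intro s hs
    rw [mem_shatterer] at hs
    have ha : a ∉ s := hs.notMem_of_forall_notMem fun t ht => (mem_filter.1 ht).2.1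
    refine ⟨ha, mem_shatterer.2 (shatters_insert fun t ht => ?_)⟩
    obtain ⟨u, hu, hsu⟩ := hs ht
    obtain ⟨hu, hau, hins⟩ := mem_filter.1 hu
    exact ⟨⟨u, hu, hau, hsu⟩, insert a u, hins, mem_insert_self a u,
      by rwa [inter_insert_of_notMem ha]⟩

theorem shatterer_restrictTo (𝒜 : Finset (Finset α)) (Y : Finset α) :
    (restrictTo 𝒜 Y).shatterer = {s ∈ 𝒜.shatterer | s ⊆ Y} := by
  ext s
  simp only [mem_filter, mem_shatterer]
  constructor
  · intro h
    have hsY : s ⊆ Y := by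
      obtain ⟨t, ht, hst⟩ := h.exists_superset
      obtain ⟨u, -, rfl⟩ := mem_image.1 ht
      exact hst.trans inter_subset_right
    refine ⟨fun t ht => ?_, hsY⟩
    obtain ⟨v, hv, hsv⟩ := h ht
    obtain ⟨u, hu, rfl⟩ := mem_image.1 hv
    exact ⟨u, hu, by rwa [inter_comm u, ← inter_assoc, inter_eq_left.2 hsY] at hsv⟩
  · rintro ⟨h, hsY⟩ t ht
    obtain ⟨u, hu, hsu⟩ := h ht
    refine ⟨u ∩ Y, mem_image_of_mem _ hu, ?_⟩
    rwa [inter_comm u, ← inter_assoc, inter_eq_left.2 hsY]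

end SetFamilies

section RepresentationMaps

variable {α : Type} [DecidableEq α] {C : Finset (Finset α)} {r : Finset α → Finset α}

def Reconstructs (C : Finset (Finset α)) (r : Finset α → Finset α) : Prop :=
  ∀ Y : Finset α, ∀ c ∈ C, ∃! c', c' ∈ C ∧ c' ∩ Y = c ∩ Y ∧ r c' ⊆ Y

def CubeInjective (C : Finset (Finset α)) (r : Finset α → Finset α) : Prop :=
  ∀ B Y, IsCubeS B Y → ∀ c ∈ C ∩ B, ∀ c' ∈ C ∩ B, r c ∩ Y = r c' ∩ Y → c = c'

def SymmDiffNonClashing (C : Finset (Finset α)) (r : Finset α → Finset α) : Prop :=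
  ∀ c ∈ C, ∀ c' ∈ C, c ≠ c' →
    c ∩ ((r c \ r c') ∪ (r c' \ r c)) ≠ c' ∩ ((r c \ r c') ∪ (r c' \ r c))

theorem NonClashing.eq_of_inter_eq (h : NonClashing C r) {Y c c' : Finset α} (hc : c ∈ C)
    (hc' : c' ∈ C) (hcY : r c ⊆ Y) (hc'Y : r c' ⊆ Y) (hcc' : c ∩ Y = c' ∩ Y) :
    c = c' := by
  by_contra hne
  refine h c hc c' hc' hne ?_
  rw [← inter_eq_right.2 (union_subset hcY hc'Y), ← inter_assoc, ← inter_assoc, hcc']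

theorem Reconstructs.card_filter_subset (h : Reconstructs C r) (s : Finset α) :
    #{c ∈ C | r c ⊆ s} = #(restrictTo C s) := by
  refine card_nbij (· ∩ s) (fun c hc => mem_image_of_mem _ (mem_filter.1 hc).1) ?_ ?_
  · intro c hc c' hc' hcc'
    obtain ⟨hc, hcs⟩ := mem_filter.1 hc
    obtain ⟨hc', hc's⟩ := mem_filter.1 hc'
    exact (h s c hc).unique ⟨hc, rfl, hcs⟩ ⟨hc', hcc'.symm, hc's⟩
  · intro τ hτ
    obtain ⟨c, hc, rfl⟩ := mem_image.1 hτ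
    obtain ⟨c', ⟨hc', hc'c, hc's⟩, -⟩ := h s c hc
    exact ⟨c', mem_filter.2 ⟨hc', hc's⟩, hc'c⟩

theorem SymmDiffNonClashing.nonClashing (h : SymmDiffNonClashing C r) : NonClashing C r := by
  intro c hc c' hc' hne hcc'
  refine h c hc c' hc' hne ?_
  have : (r c \ r c') ∪ (r c' \ r c) ⊆ r c ∪ r c' :=
    union_subset_union sdiff_subset sdiff_subset
  rw [← inter_eq_right.2 this, ← inter_assoc, ← inter_assoc, hcc']

theorem SymmDiffNonClashing.injOn (h : SymmDiffNonClashing C r) : Set.InjOn r C := by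
  intro c hc c' hc' hcc'
  by_contra hne
  exact h c hc c' hc' hne (by simp [hcc'])

end RepresentationMaps

section Ample

variable {C : Finset (Finset X)}

theorem shatteredSets_eq_shatterer (C : Finset (Finset X)) : shatteredSets C = C.shatterer := by
  ext Z
  simp only [shatteredSets, mem_filter, mem_univ, true_and, mem_shatterer, _root_.Shatters,
    Finset.Shatters, mem_powerset, inter_comm Z]

theorem isAmple_iff : IsAmple C ↔ #C = #C.shatterer := by
  rw [IsAmple, shatteredSets_eq_shatterer]

theorem IsAmple.of_card_add_card {A B : Finset (Finset X)} (hC : IsAmple C)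
    (hcard : #A + #B = #C) (hshatterer : #A.shatterer + #B.shatterer ≤ #C.shatterer) :
    IsAmple A ∧ IsAmple B := by
  simp only [isAmple_iff] at hC ⊢
  have := card_le_card_shatterer A
  have := card_le_card_shatterer B
  omega

theorem IsAmple.filter_mem_iff (hC : IsAmple C) (a : X) (p : Prop) [Decidable p] :
    IsAmple {c ∈ C | a ∈ c ↔ p} := by
  obtain ⟨hmem, hnotMem⟩ :=
    hC.of_card_add_card (card_filter_add_card_filter_not _) (card_shatterer_filter_add_le C a)
  by_cases hp : p
  · simpa [hp] using hmem
  · simpa [hp] using hnotMem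

theorem IsAmple.filter_forall_mem_iff (hC : IsAmple C) (S t : Finset X) :
    IsAmple {c ∈ C | ∀ x ∈ S, x ∈ c ↔ x ∈ t} := by
  induction S using Finset.induction_on with
  | empty => simpa using hC
  | insert a S _ ih =>
    simpa only [filter_filter, forall_mem_insert, and_comm] using ih.filter_mem_iff a (a ∈ t)

theorem IsAmple.restrictX (hC : IsAmple C) (a : X) : IsAmple (restrictX C a) :=
  (hC.of_card_add_card (card_restrictX_add_card_reduction C a)
    (card_shatterer_restrictX_add_reduction_le C a)).1

theorem IsAmple.restrictTo (hC : IsAmple C) (Y : Finset X) : IsAmple (restrictTo C Y) := by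
  rw [← compl_compl Y]
  induction Yᶜ using Finset.induction_on with
  | empty => simpa [_root_.restrictTo] using hC
  | insert a S _ ih =>
    have : _root_.restrictTo C (insert a S)ᶜ = _root_.restrictX (_root_.restrictTo C Sᶜ) a := by
      simp only [_root_.restrictTo, _root_.restrictX, image_image, compl_insert, inter_erase]
      rfl
    rw [this]
    exact ih.restrictX a

end Ample

section AmpleRepresentation

variable {C : Finset (Finset X)} {r : Finset X → Finset X}

theorem mem_cube_iff {Y t c : Finset X} (ht : t ∩ Y = ∅) :
    c ∈ Y.powerset.image (t ∪ ·) ↔ ∀ x ∈ Yᶜ, x ∈ c ↔ x ∈ t := by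
  constructor
  · rintro h x hx
    obtain ⟨s, hs, rfl⟩ := mem_image.1 h
    have : x ∉ s := fun hxs => mem_compl.1 hx (mem_powerset.1 hs hxs)
    simp [this]
  · intro h
    refine mem_image.2 ⟨c ∩ Y, mem_powerset.2 inter_subset_right, ?_⟩
    ext x
    by_cases hx : x ∈ Y
    · have : x ∉ t := fun hxt => notMem_empty x (ht ▸ mem_inter.2 ⟨hxt, hx⟩)
      simp [hx, this]
    · simp [hx, h x (mem_compl.2 hx)]

theorem NonClashing.reconstructs (hsurj : Set.SurjOn r C (shatteredSets C))
    (h : NonClashing C r) : Reconstructs C r := by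
  intro Y c hc
  set A := {d ∈ C | r d ⊆ Y}
  have hinj : Set.InjOn (· ∩ Y) (A : Set (Finset X)) := fun d hd d' hd' hdd' =>
    h.eq_of_inter_eq (mem_filter.1 hd).1 (mem_filter.1 hd').1 (mem_filter.1 hd).2
      (mem_filter.1 hd').2 hdd'
  have himage : A.image (· ∩ Y) = restrictTo C Y := by
    refine eq_of_subset_of_card_le (image_subset_image (filter_subset _ _)) ?_
    calc #(restrictTo C Y) ≤ #(restrictTo C Y).shatterer := card_le_card_shatterer _
      _ = #{Z ∈ shatteredSets C | Z ⊆ Y} := by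
          rw [shatterer_restrictTo, shatteredSets_eq_shatterer]
      _ ≤ #A := card_le_card_of_surjOn r fun Z hZ => by
          obtain ⟨hZ, hZY⟩ := mem_filter.1 hZ
          obtain ⟨d, hd, rfl⟩ := hsurj hZ
          exact ⟨d, mem_filter.2 ⟨hd, hZY⟩, rfl⟩
      _ = #(A.image (· ∩ Y)) := (card_image_of_injOn hinj).symm
  have hcY : c ∩ Y ∈ A.image (· ∩ Y) := by
    rw [himage]
    exact mem_image_of_mem _ hc
  obtain ⟨c', hc'A, hc'c⟩ := mem_image.1 hcY
  obtain ⟨hc', hc'Y⟩ := mem_filter.1 hc'A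
  exact ⟨c', ⟨hc', hc'c, hc'Y⟩, fun d ⟨hd, hdc, hdY⟩ =>
    h.eq_of_inter_eq hd hc' hdY hc'Y (hdc.trans hc'c.symm)⟩

theorem Reconstructs.injOn (hC : IsAmple C) (h : Reconstructs C r) : Set.InjOn r C := by
  have hfiber : (fun v => #{c ∈ C | r c = v}) = fun v => #{Z ∈ C.shatterer | Z = v} := by
    refine eq_of_sum_powerset_eq fun s => ?_
    rw [sum_powerset_card_filter_eq, h.card_filter_subset, isAmple_iff.1 (hC.restrictTo s),
      shatterer_restrictTo]
    exact (sum_powerset_card_filter_eq C.shatterer id s).symm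
  intro c hc c' hc' hcc'
  have hle : #{d ∈ C | r d = r c} ≤ 1 := by
    rw [congrFun hfiber, filter_eq']
    split_ifs <;> simp
  exact card_le_one.1 hle c (mem_filter.2 ⟨hc, rfl⟩) c' (mem_filter.2 ⟨hc', hcc'.symm⟩)

theorem Reconstructs.filter_forall_mem_iff (h : Reconstructs C r) (Y t : Finset X) :
    Reconstructs {c ∈ C | ∀ x ∈ Yᶜ, x ∈ c ↔ x ∈ t} (r · ∩ Y) := by
  set G := {c ∈ C | ∀ x ∈ Yᶜ, x ∈ c ↔ x ∈ t}
  intro s g hg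
  have agree_iff : ∀ d ∈ G, d ∩ (Yᶜ ∪ s) = g ∩ (Yᶜ ∪ s) ↔ d ∩ s = g ∩ s := fun d hd => by
    simp only [inter_eq_inter_iff_forall, forall_mem_union]
    exact and_iff_right fun x hx =>
      ((mem_filter.1 hd).2 x hx).trans ((mem_filter.1 hg).2 x hx).symm
  have subset_iff : ∀ d, r d ⊆ Yᶜ ∪ s ↔ r d ∩ Y ⊆ s := fun d => by
    simp only [subset_iff, mem_union, mem_compl, mem_inter]
    grind
  obtain ⟨u, ⟨hu, hug, hus⟩, huniq⟩ := h (Yᶜ ∪ s) g (mem_filter.1 hg).1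
  have huG : u ∈ G := by
    refine mem_filter.2 ⟨hu, fun x hx => ?_⟩
    exact (inter_eq_inter_iff_forall.1 hug x (mem_union_left s hx)).trans
      ((mem_filter.1 hg).2 x hx)
  exact ⟨u, ⟨huG, (agree_iff u huG).1 hug, (subset_iff u).1 hus⟩, fun d ⟨hd, hdg, hds⟩ =>
    huniq d ⟨(mem_filter.1 hd).1, (agree_iff d hd).2 hdg, (subset_iff d).2 hds⟩⟩

theorem Reconstructs.cubeInjective (hC : IsAmple C) (h : Reconstructs C r) :
    CubeInjective C r := by
  rintro B Y ⟨t, ht, rfl⟩ c hc c' hc' hcc'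
  rw [mem_inter, mem_cube_iff ht] at hc hc'
  exact (h.filter_forall_mem_iff Y t).injOn (hC.filter_forall_mem_iff Yᶜ t)
    (mem_filter.2 hc) (mem_filter.2 hc') hcc'

theorem CubeInjective.symmDiffNonClashing (h : CubeInjective C r) : SymmDiffNonClashing C r := by
  intro c hc c' hc' hne hcc'
  set Δ := (r c \ r c') ∪ (r c' \ r c)
  have ht : (c ∩ Δ) ∩ Δᶜ = ∅ := by rw [inter_assoc, inter_compl, inter_empty]
  refine hne (h _ Δᶜ ⟨c ∩ Δ, ht, rfl⟩ c ?_ c' ?_ ?_)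
  · refine mem_inter.2 ⟨hc, (mem_cube_iff ht).2 fun x hx => ?_⟩
    rw [compl_compl] at hx
    simp [hx]
  · refine mem_inter.2 ⟨hc', (mem_cube_iff ht).2 fun x hx => ?_⟩
    rw [compl_compl] at hx
    simp [hcc', hx]
  · ext x
    simp only [Δ, mem_inter, mem_compl, mem_union, mem_sdiff]
    tauto

theorem SymmDiffNonClashing.surjOn (hC : IsAmple C) (hmaps : Set.MapsTo r C (shatteredSets C))
    (h : SymmDiffNonClashing C r) : Set.SurjOn r C (shatteredSets C) :=
  surjOn_of_injOn_of_card_le r hmaps h.injOn hC.ge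

end AmpleRepresentation

/-- For an ample class `C` and a bijection `r : C → X(C)`, the conditions
(R1) ∪-non-clashing, (R2) reconstruction, (R3) cube injectivity and (R4) Δ-non-clashing
are equivalent; moreover any map `r : C → X(C)` satisfying (R4) is automatically a
bijection onto `X(C)`. -/
theorem stmt_14 (C : Finset (Finset X)) (hC : IsAmple C) (r : Finset X → Finset X)
    (hmaps : ∀ c ∈ C, r c ∈ shatteredSets C) :
    ((Set.InjOn r ↑C ∧ ∀ Y ∈ shatteredSets C, ∃ c ∈ C, r c = Y) →
      (((∀ c ∈ C, ∀ c' ∈ C, c ≠ c' →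
          c ∩ (r c ∪ r c') ≠ c' ∩ (r c ∪ r c')) ↔
        (∀ (Y : Finset X), ∀ c ∈ C,
          ∃! c', c' ∈ C ∧ c' ∩ Y = c ∩ Y ∧ r c' ⊆ Y)) ∧
      ((∀ (Y : Finset X), ∀ c ∈ C,
          ∃! c', c' ∈ C ∧ c' ∩ Y = c ∩ Y ∧ r c' ⊆ Y) ↔
        (∀ B Y, IsCubeS B Y → ∀ c ∈ C ∩ B, ∀ c' ∈ C ∩ B,
          r c ∩ Y = r c' ∩ Y → c = c')) ∧
      ((∀ B Y, IsCubeS B Y → ∀ c ∈ C ∩ B, ∀ c' ∈ C ∩ B,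
          r c ∩ Y = r c' ∩ Y → c = c') ↔
        (∀ c ∈ C, ∀ c' ∈ C, c ≠ c' →
          c ∩ ((r c \ r c') ∪ (r c' \ r c)) ≠ c' ∩ ((r c \ r c') ∪ (r c' \ r c)))))) ∧
    ((∀ c ∈ C, ∀ c' ∈ C, c ≠ c' →
        c ∩ ((r c \ r c') ∪ (r c' \ r c)) ≠ c' ∩ ((r c \ r c') ∪ (r c' \ r c))) →
      Set.InjOn r ↑C ∧ ∀ Y ∈ shatteredSets C, ∃ c ∈ C, r c = Y) := by
  refine ⟨fun ⟨_, hsurj⟩ => ?_, fun h4 =>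
    ⟨SymmDiffNonClashing.injOn h4, SymmDiffNonClashing.surjOn hC hmaps h4⟩⟩
  have h12 : NonClashing C r → Reconstructs C r := NonClashing.reconstructs hsurj
  have h23 : Reconstructs C r → CubeInjective C r := Reconstructs.cubeInjective hC
  have h34 : CubeInjective C r → SymmDiffNonClashing C r := CubeInjective.symmDiffNonClashing
  have h41 : SymmDiffNonClashing C r → NonClashing C r := SymmDiffNonClashing.nonClashing
  exact ⟨⟨h12, h41 ∘ h34 ∘ h23⟩, ⟨h23, h12 ∘ h41 ∘ h34⟩, ⟨h34, h23 ∘ h12 ∘ h41⟩⟩
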